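/- arXiv:2503.14664 — 3 statements merged into one kernel-verified Lean document; each statement's English description precedes it below -/
import Mathlib

section
/- Let m, u be integers with 2 ≤ u ≤ m and let Λ = P_{m,u} be the pseudo-ordinary semigroup with multiplicity m and jump u. Then c(Λ) = m + u; the right generators of Λ are exactly the integers σ with c(Λ) ≤ σ ≤ c(Λ) + m − 1 and σ ≠ 2m; and such a right generator σ is strong if and only if σ < c(Λ) + u. -/
open Pointwise

namespace NumSgpPaper

/-- `S` is a numerical semigroup: an additive submonoid of ℕ with finite complement. -/
structure IsNumSgp (S : Set ℕ) : Prop where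
  zero_mem : 0 ∈ S
  add_mem : ∀ ⦃a b : ℕ⦄, a ∈ S → b ∈ S → a + b ∈ S
  cofinite : Sᶜ.Finite

/-- The Frobenius number: the largest gap of `S` (junk value `0` if there are no gaps). -/
noncomputable def frob (S : Set ℕ) : ℕ := sSup Sᶜ

open Classical in
/-- The conductor: one plus the largest gap, and `0` if there are no gaps (so `c(ℕ) = 0`). -/
noncomputable def conductor (S : Set ℕ) : ℕ := if Sᶜ = ∅ then 0 else frob S + 1

/-- The genus: the number of gaps. -/
noncomputable def genus (S : Set ℕ) : ℕ := Sᶜ.ncard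

/-- The multiplicity: the smallest positive element. -/
noncomputable def mult (S : Set ℕ) : ℕ := sInf {n : ℕ | n ∈ S ∧ 0 < n}

/-- The jump: the difference between the second and first positive elements. -/
noncomputable def jump (S : Set ℕ) : ℕ := sInf {n : ℕ | n ∈ S ∧ mult S < n} - mult S

/-- A minimal generator: a positive element of `S` that is not the sum of
two positive elements of `S`. -/
def IsMinGen (S : Set ℕ) (x : ℕ) : Prop :=
  0 < x ∧ x ∈ S ∧ ¬ ∃ a b : ℕ, 0 < a ∧ 0 < b ∧ a ∈ S ∧ b ∈ S ∧ a + b = x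

/-- A right generator: a minimal generator larger than the Frobenius number. -/
def IsRightGen (S : Set ℕ) (x : ℕ) : Prop := IsMinGen S x ∧ frob S < x

/-- A strong generator: a right generator `σ` such that `σ + m(S)` is a minimal
generator of `S \ {σ}`. -/
def IsStrongGen (S : Set ℕ) (σ : ℕ) : Prop :=
  IsRightGen S σ ∧ IsMinGen (S \ {σ}) (σ + mult S)

/-- `S` is ordinary when its gaps are exactly `{1, …, g(S)}`. -/
def IsOrdinary (S : Set ℕ) : Prop := Sᶜ = Set.Icc 1 (genus S)

/-- The left elements: the elements of `S` smaller than the Frobenius number. -/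
def leftEls (S : Set ℕ) : Set ℕ := {x : ℕ | x ∈ S ∧ x < frob S}

/-- The gcd of a set of natural numbers. -/
noncomputable def setGcd (A : Set ℕ) : ℕ :=
  sInf {d : ℕ | (∀ a ∈ A, d ∣ a) ∧ ∀ e : ℕ, (∀ a ∈ A, e ∣ a) → e ∣ d}

/-- `ω(S)`: the gcd of the left elements of `S`. -/
noncomputable def omega' (S : Set ℕ) : ℕ := setGcd (leftEls S)

/-- The shrinking of `S`: the additive submonoid of ℕ generated by the left
elements divided by their gcd. -/
noncomputable def shrink (S : Set ℕ) : Set ℕ :=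
  (AddSubmonoid.closure ((fun x => x / omega' S) '' leftEls S) : AddSubmonoid ℕ)

/-- `T` is a descendant of `S`: a numerical semigroup contained in `S` all of whose
missing elements lie beyond the Frobenius number of `S`. -/
def IsDescendant (S T : Set ℕ) : Prop :=
  IsNumSgp T ∧ T ⊆ S ∧ ∀ x ∈ S \ T, frob S < x

/-- The pseudo-ordinary semigroup `P_{m,u} = {0, m} ∪ {n : n ≥ m + u}`. -/
def P (m u : ℕ) : Set ℕ := {0, m} ∪ {n : ℕ | m + u ≤ n}

/-- The submonoid of ℕ generated by the interval `{a, …, b}`. -/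
def intervalSgp (a b : ℕ) : Set ℕ := (AddSubmonoid.closure (Set.Icc a b) : AddSubmonoid ℕ)

lemma mem_P_iff {m u x : ℕ} : x ∈ P m u ↔ x = 0 ∨ x = m ∨ m + u ≤ x := by
  simp [P, or_assoc]

lemma conductor_eq_frob_add_one {S : Set ℕ} (h : Sᶜ.Nonempty) : conductor S = frob S + 1 :=
  if_neg h.ne_empty

lemma frob_P {m u : ℕ} (hu : 2 ≤ u) : frob (P m u) = m + u - 1 :=
  IsGreatest.csSup_eq ⟨by simp only [Set.mem_compl_iff, mem_P_iff]; omega,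
    fun x hx => by simp only [Set.mem_compl_iff, mem_P_iff] at hx; omega⟩

lemma conductor_P {m u : ℕ} (hu : 2 ≤ u) : conductor (P m u) = m + u := by
  have hgap : m + u - 1 ∈ (P m u)ᶜ := by simp only [Set.mem_compl_iff, mem_P_iff]; omega
  rw [conductor_eq_frob_add_one ⟨_, hgap⟩, frob_P hu]
  omega

lemma mult_P {m u : ℕ} (hm : 0 < m) : mult (P m u) = m :=
  IsLeast.csInf_eq ⟨⟨mem_P_iff.2 (.inr (.inl rfl)), hm⟩,
    fun x ⟨hx, hpos⟩ => by rw [mem_P_iff] at hx; omega⟩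

/-- The sums of two positive elements of `P m u` are `2m` and everything from `2m + u` on. -/
lemma isMinGen_P_iff {m u σ : ℕ} (hm : 0 < m) :
    IsMinGen (P m u) σ ↔ (σ = m ∨ m + u ≤ σ) ∧ σ ≠ 2 * m ∧ σ < 2 * m + u := by
  have hmP : m ∈ P m u := mem_P_iff.2 (.inr (.inl rfl))
  constructor
  · rintro ⟨hpos, hσ, hirred⟩
    rw [mem_P_iff] at hσ
    refine ⟨by omega, fun h => hirred ⟨m, m, hm, hm, hmP, hmP, by omega⟩, ?_⟩
    by_contra! h
    exact hirred ⟨m, σ - m, hm, by omega, hmP, mem_P_iff.2 (by omega), by omega⟩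
  · rintro ⟨hσ, h2m, hlt⟩
    refine ⟨by omega, mem_P_iff.2 (by omega), ?_⟩
    rintro ⟨a, b, ha, hb, haP, hbP, rfl⟩
    rw [mem_P_iff] at haP hbP
    omega

lemma isRightGen_P_iff {m u σ : ℕ} (hu : 2 ≤ u) (hm : 0 < m) :
    IsRightGen (P m u) σ ↔ m + u ≤ σ ∧ σ < 2 * m + u ∧ σ ≠ 2 * m := by
  rw [IsRightGen, isMinGen_P_iff hm, frob_P hu]
  omega

/-- With `σ` removed, `m + σ` is no longer a decomposition of `σ + m`; any other one
uses two elements `≥ m + u`. -/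
lemma isMinGen_P_diff_add_iff {m u σ : ℕ} (hm : 0 < m) (hu : 0 < u) (hσ : m + u ≤ σ) :
    IsMinGen (P m u \ {σ}) (σ + m) ↔ σ < m + 2 * u := by
  have mem_diff : ∀ {x}, x ∈ P m u \ {σ} ↔ (x = 0 ∨ x = m ∨ m + u ≤ x) ∧ x ≠ σ := by
    simp [mem_P_iff]
  constructor
  · rintro ⟨-, -, hirred⟩
    by_contra! h
    exact hirred ⟨m + u, σ - u, by omega, by omega, mem_diff.2 (by omega),
      mem_diff.2 (by omega), by omega⟩
  · intro hlt
    refine ⟨by omega, mem_diff.2 (by omega), ?_⟩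
    rintro ⟨a, b, ha, hb, haP, hbP, hab⟩
    rw [mem_diff] at haP hbP
    omega

/-- For the pseudo-ordinary semigroup `P_{m,u}` (with `2 ≤ u ≤ m`): `c = m + u`;
the right generators are exactly the integers in `[c, c + m - 1]` other than `2m`;
and such a right generator is strong iff it is `< c + u`. -/
theorem stmt3 (m u : ℕ) (h2 : 2 ≤ u) (hum : u ≤ m) :
    conductor (P m u) = m + u ∧
    (∀ σ : ℕ, IsRightGen (P m u) σ ↔
      conductor (P m u) ≤ σ ∧ σ ≤ conductor (P m u) + m - 1 ∧ σ ≠ 2 * m) ∧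
    (∀ σ : ℕ, IsRightGen (P m u) σ →
      (IsStrongGen (P m u) σ ↔ σ < conductor (P m u) + u)) := by
  have hm : 0 < m := by omega
  refine ⟨conductor_P h2, fun σ => ?_, fun σ hσ => ?_⟩
  · rw [conductor_P h2, isRightGen_P_iff h2 hm]
    omega
  · have hσ_ge : m + u ≤ σ := ((isRightGen_P_iff h2 hm).1 hσ).1
    rw [conductor_P h2, IsStrongGen, and_iff_right hσ, mult_P hm,
      isMinGen_P_diff_add_iff hm (by omega) hσ_ge]
    omega

end NumSgpPaper
end

section
/- Let Λ be a non-ordinary numerical semigroup with multiplicity m = m(Λ) and ω = ω(Λ), and let σ be a right generator of Λ with σ ≡ 0 (mod ω). Set ω̃ = ω(Λ ∖ {σ}). Then σ is a strong generator of Λ if and only if either σ + m ≢ 0 (mod ω̃), or σ + m ≡ 0 (mod ω̃) and (σ + m)/ω̃ ∉ shrink(Λ ∖ {σ}). -/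
open Pointwise

namespace NumSgpPaper

/-!
Put `T = Λ \ {σ}`, so that `F(T) = σ` and the left elements of `T` are the elements of `Λ`
below `σ`. Any decomposition `σ + m = a + b` in `T` has `a, b ≥ m`, hence `a, b < σ`; so
`σ + m` fails to be a minimal generator of `T` exactly when it lies in the monoid generated by
`L(T)`. That monoid is `ω̃ · shrink(T)`, which turns the condition into the one on the right.
-/

lemma exists_gcd_of_set (A : Set ℕ) :
    ∃ d : ℕ, (∀ a ∈ A, d ∣ a) ∧ ∀ e : ℕ, (∀ a ∈ A, e ∣ a) → e ∣ d := by
  set I := Ideal.span (((↑) : ℕ → ℤ) '' A)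
  set g := Submodule.IsPrincipal.generator I
  have hmem_iff : ∀ z : ℤ, z ∈ I ↔ g ∣ z := fun z => by
    rw [← Ideal.mem_span_singleton, Ideal.span_singleton_generator]
  refine ⟨g.natAbs, fun a ha => ?_, fun e he => ?_⟩
  · exact Int.natAbs_dvd_natAbs.mpr ((hmem_iff a).mp (Ideal.subset_span ⟨a, ha, rfl⟩))
  · have hle : I ≤ Ideal.span {(e : ℤ)} := by
      rw [Ideal.span_le]
      rintro _ ⟨a, ha, rfl⟩
      exact Ideal.mem_span_singleton.mpr (Int.natCast_dvd_natCast.mpr (he a ha))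
    exact Int.natAbs_dvd_natAbs.mpr
      (Ideal.mem_span_singleton.mp (hle ((hmem_iff g).mpr dvd_rfl)))

lemma setGcd_dvd {A : Set ℕ} {a : ℕ} (ha : a ∈ A) : setGcd A ∣ a :=
  (Nat.sInf_mem (exists_gcd_of_set A)).1 a ha

/-- For `d = 0` both sides say `n = 0`, as `n / 0 = 0`. -/
lemma mem_closure_iff_dvd_and_div_mem {L : Set ℕ} {d : ℕ} (hd : ∀ a ∈ L, d ∣ a)
    (n : ℕ) : n ∈ AddSubmonoid.closure L ↔
      d ∣ n ∧ n / d ∈ AddSubmonoid.closure ((· / d) '' L) := by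
  have hmap : (AddSubmonoid.closure ((· / d) '' L)).map (AddMonoidHom.mulLeft d) =
      AddSubmonoid.closure L := by
    rw [AddMonoidHom.map_mclosure, Set.image_image]
    congr 1
    exact (Set.image_congr fun a ha => Nat.mul_div_cancel' (hd a ha)).trans (Set.image_id' L)
  rw [← hmap, AddSubmonoid.mem_map]
  constructor
  · rintro ⟨k, hk, rfl⟩
    refine ⟨dvd_mul_right d k, ?_⟩
    rcases d.eq_zero_or_pos with rfl | hd_pos
    · simp
    · simpa [Nat.mul_div_cancel_left k hd_pos] using hk
  · rintro ⟨hdn, hk⟩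
    exact ⟨n / d, hk, Nat.mul_div_cancel' hdn⟩

lemma mem_of_isMinGen_closure {L : Set ℕ} {x : ℕ}
    (hx : IsMinGen (AddSubmonoid.closure L) x) : x ∈ L := by
  obtain ⟨hx_pos, hx_mem, hx_irred⟩ := hx
  induction hx_mem using AddSubmonoid.closure_induction with
  | mem y hy => exact hy
  | zero => exact absurd hx_pos (lt_irrefl 0)
  | add y z hy hz ihy ihz =>
    rcases y.eq_zero_or_pos with rfl | hy_pos
    · simp only [zero_add] at hx_irred ⊢
      exact ihz (by omega) hx_irred
    rcases z.eq_zero_or_pos with rfl | hz_pos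
    · simp only [add_zero] at hx_irred ⊢
      exact ihy (by omega) hx_irred
    exact absurd ⟨y, z, hy_pos, hz_pos, hy, hz, rfl⟩ hx_irred

lemma mult_le {S : Set ℕ} {x : ℕ} (hx : x ∈ S) (hx_pos : 0 < x) : mult S ≤ x :=
  Nat.sInf_le ⟨hx, hx_pos⟩

namespace IsNumSgp

variable {S : Set ℕ}

def toAddSubmonoid (hS : IsNumSgp S) : AddSubmonoid ℕ where
  carrier := S
  add_mem' := fun ha hb => hS.add_mem ha hb
  zero_mem' := hS.zero_mem

lemma closure_subset (hS : IsNumSgp S) {L : Set ℕ} (hL : L ⊆ S) :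
    (AddSubmonoid.closure L : Set ℕ) ⊆ S :=
  show AddSubmonoid.closure L ≤ hS.toAddSubmonoid from AddSubmonoid.closure_le.mpr hL

lemma le_frob_of_not_mem (hS : IsNumSgp S) {x : ℕ} (hx : x ∉ S) : x ≤ frob S :=
  le_csSup hS.cofinite.bddAbove hx

lemma mem_of_frob_lt (hS : IsNumSgp S) {x : ℕ} (hx : frob S < x) : x ∈ S := by
  by_contra h
  exact absurd (hS.le_frob_of_not_mem h) (not_le.mpr hx)

lemma mult_mem_and_pos (hS : IsNumSgp S) : mult S ∈ S ∧ 0 < mult S :=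
  Nat.sInf_mem (s := {n | n ∈ S ∧ 0 < n})
    ⟨frob S + 1, hS.mem_of_frob_lt (Nat.lt_succ_self _), Nat.succ_pos _⟩

lemma diff_singleton (hS : IsNumSgp S) {σ : ℕ} (hσ : IsMinGen S σ) : IsNumSgp (S \ {σ}) where
  zero_mem := ⟨hS.zero_mem, by simpa using hσ.1.ne⟩
  add_mem := by
    rintro a b ⟨ha, ha_ne⟩ ⟨hb, hb_ne⟩
    refine ⟨hS.add_mem ha hb, fun hab => ?_⟩
    rw [Set.mem_singleton_iff] at ha_ne hb_ne hab
    rcases a.eq_zero_or_pos with rfl | ha_pos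
    · exact hb_ne (by simpa using hab)
    rcases b.eq_zero_or_pos with rfl | hb_pos
    · exact ha_ne (by simpa using hab)
    exact hσ.2.2 ⟨a, b, ha_pos, hb_pos, ha, hb, hab⟩
  cofinite := by
    rw [Set.compl_sdiff]
    exact (Set.finite_singleton σ).union hS.cofinite

lemma frob_diff_singleton (hS : IsNumSgp S) {σ : ℕ} (hσ : IsRightGen S σ) :
    frob (S \ {σ}) = σ := by
  have hσ_gap : σ ∈ (S \ {σ})ᶜ := by simp
  refine le_antisymm (csSup_le ⟨σ, hσ_gap⟩ fun x hx => ?_)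
    (le_csSup (hS.diff_singleton hσ.1).cofinite.bddAbove hσ_gap)
  by_cases hxS : x ∈ S
  · simp_all
  · exact (hS.le_frob_of_not_mem hxS).trans hσ.2.le

lemma isMinGen_add_mult_iff_not_mem_closure (hS : IsNumSgp S) {σ : ℕ} (hσ : IsRightGen S σ) :
    IsMinGen (S \ {σ}) (σ + mult S) ↔
      σ + mult S ∉ AddSubmonoid.closure (leftEls (S \ {σ})) := by
  have hT := hS.diff_singleton hσ.1
  have hfrob := hS.frob_diff_singleton hσ
  have hσ_frob := hσ.2
  have hm_pos := hS.mult_mem_and_pos.2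
  constructor
  · intro hmin hcl
    have hleft : σ + mult S ∈ leftEls (S \ {σ}) := by
      refine mem_of_isMinGen_closure ⟨hmin.1, hcl, ?_⟩
      rintro ⟨a, b, ha, hb, haL, hbL, hab⟩
      have hsub := hT.closure_subset (L := leftEls (S \ {σ})) fun _ hx => hx.1
      exact hmin.2.2 ⟨a, b, ha, hb, hsub haL, hsub hbL, hab⟩
    have hlt := hleft.2
    rw [hfrob] at hlt
    omega
  · intro hncl
    refine ⟨by omega, ⟨hS.mem_of_frob_lt (by omega), by simp; omega⟩, ?_⟩
    rintro ⟨a, b, ha, hb, haT, hbT, hab⟩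
    have hma := mult_le haT.1 ha
    have hmb := mult_le hbT.1 hb
    have ha_ne : a ≠ σ := by simpa using haT.2
    have hb_ne : b ≠ σ := by simpa using hbT.2
    refine hncl (hab ▸ AddSubmonoid.add_mem _ (AddSubmonoid.subset_closure ⟨haT, ?_⟩)
      (AddSubmonoid.subset_closure ⟨hbT, ?_⟩)) <;> omega

end IsNumSgp

theorem stmt7_general (Λ : Set ℕ) (h : IsNumSgp Λ)
    (σ : ℕ) (hσ : IsRightGen Λ σ) :
    IsStrongGen Λ σ ↔
      (¬ omega' (Λ \ {σ}) ∣ (σ + mult Λ)) ∨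
      (omega' (Λ \ {σ}) ∣ (σ + mult Λ) ∧
        (σ + mult Λ) / omega' (Λ \ {σ}) ∉ shrink (Λ \ {σ})) := by
  have hclosure := mem_closure_iff_dvd_and_div_mem
    (fun a ha => setGcd_dvd (A := leftEls (Λ \ {σ})) ha) (σ + mult Λ)
  rw [IsStrongGen, and_iff_right hσ, h.isMinGen_add_mult_iff_not_mem_closure hσ, hclosure]
  change ¬(_ ∧ _ ∈ shrink (Λ \ {σ})) ↔ _
  tauto

/-- A right generator `σ` of a non-ordinary semigroup `Λ` with `ω(Λ) ∣ σ` is strong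
iff either `ω̃ ∤ σ + m`, or `ω̃ ∣ σ + m` and `(σ + m)/ω̃ ∉ shrink(Λ \ {σ})`,
where `ω̃ = ω(Λ \ {σ})`. -/
theorem stmt7 (Λ : Set ℕ) (h : IsNumSgp Λ) (hord : ¬ IsOrdinary Λ)
    (σ : ℕ) (hσ : IsRightGen Λ σ) (hmod : omega' Λ ∣ σ) :
    IsStrongGen Λ σ ↔
      (¬ omega' (Λ \ {σ}) ∣ (σ + mult Λ)) ∨
      (omega' (Λ \ {σ}) ∣ (σ + mult Λ) ∧
        (σ + mult Λ) / omega' (Λ \ {σ}) ∉ shrink (Λ \ {σ})) :=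
  stmt7_general Λ h σ hσ

end NumSgpPaper
end

section
/- Let i, j be integers with 2 ≤ i < j, and set K = ⌊(j−2)/(j−i)⌋. Then the genus of the numerical semigroup Λ_{{i,…,j}} generated by the interval {i, i+1, …, j} equals Σ_{k=1}^{K} (i − 1 − (k−1)(j−i)). -/
open Pointwise

namespace NumSgpPaper

/-!
Sums of exactly `k` generators from `{a, …, b}` fill the whole interval `[k a, k b]`, so the
gaps of `Λ_{a,…,b}` are the integers strictly between `k b` and `(k + 1) a` for some `k`.
Such a block has `a - 1 - k (b - a)` elements and is nonempty only when
`k ≤ (a - 2) / (b - a)`; the blocks are disjoint, and the genus is the sum of their sizes.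
-/

open Finset Function

variable {a b n : ℕ}

theorem mem_intervalSgp_of_mul_le_of_le_mul (hab : a ≤ b) (k : ℕ) (hlo : k * a ≤ n)
    (hhi : n ≤ k * b) : n ∈ intervalSgp a b := by
  induction k generalizing n with
  | zero =>
    obtain rfl : n = 0 := by simpa using hhi
    exact (AddSubmonoid.closure _).zero_mem
  | succ k ih =>
    rw [add_one_mul] at hlo hhi
    have hk : k * a ≤ k * b := Nat.mul_le_mul_left k hab
    have hx : min b (n - k * a) ∈ Set.Icc a b := ⟨by omega, min_le_left _ _⟩
    rw [show n = (n - min b (n - k * a)) + min b (n - k * a) by omega]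
    exact add_mem (ih (by omega) (by omega)) (AddSubmonoid.subset_closure hx)

theorem mem_intervalSgp_iff (hab : a ≤ b) :
    n ∈ intervalSgp a b ↔ ∃ k, k * a ≤ n ∧ n ≤ k * b := by
  refine ⟨fun h => ?_, fun ⟨k, hlo, hhi⟩ => mem_intervalSgp_of_mul_le_of_le_mul hab k hlo hhi⟩
  induction h using AddSubmonoid.closure_induction with
  | mem x hx => exact ⟨1, by simpa using hx.1, by simpa using hx.2⟩
  | zero => exact ⟨0, by simp, by simp⟩
  | add x y _ _ hx hy =>
    obtain ⟨k, hxlo, hxhi⟩ := hx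
    obtain ⟨l, hylo, hyhi⟩ := hy
    exact ⟨k + l, by rw [add_mul]; omega, by rw [add_mul]; omega⟩

theorem not_mem_intervalSgp_iff (hab : a ≤ b) (hb : 0 < b) :
    n ∉ intervalSgp a b ↔ ∃ k, k * b < n ∧ n < (k + 1) * a := by
  simp only [mem_intervalSgp_iff hab, not_exists, not_and, not_le]
  constructor
  · intro h
    have hn : 0 < n := by simpa using h 0
    refine ⟨(n - 1) / b, ?_, ?_⟩
    · have := Nat.div_mul_le_self (n - 1) b
      omega
    · by_contra! hle
      have hlt := h _ hle
      have hdiv := Nat.lt_div_mul_add (a := n - 1) hb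
      rw [add_one_mul] at hlt
      omega
  · rintro ⟨k, hlo, hhi⟩ m hm
    rcases le_or_gt m k with hmk | hmk
    · exact (Nat.mul_le_mul_right b hmk).trans_lt hlo
    · exact absurd hhi ((Nat.mul_le_mul_right a hmk).trans hm).not_gt

theorem le_div_of_mul_lt_of_lt_mul {k : ℕ} (hab : a < b) (hlo : k * b < n)
    (hhi : n < (k + 1) * a) : k ≤ (a - 2) / (b - a) := by
  have hsplit : k * b = k * a + k * (b - a) := by rw [← Nat.mul_add]; congr 1; omega
  rw [Nat.le_div_iff_mul_le (by omega)]
  rw [add_one_mul] at hhi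
  omega

theorem compl_intervalSgp (hab : a < b) :
    (intervalSgp a b)ᶜ =
      ↑((range ((a - 2) / (b - a) + 1)).biUnion fun k => Ioo (k * b) ((k + 1) * a)) := by
  ext n
  simp only [Set.mem_compl_iff, not_mem_intervalSgp_iff hab.le (by omega : 0 < b), coe_biUnion,
    coe_range, Set.mem_Iio, coe_Ioo, Set.mem_iUnion, Set.mem_Ioo, exists_prop]
  constructor
  · rintro ⟨k, hlo, hhi⟩
    exact ⟨k, Nat.lt_succ_of_le (le_div_of_mul_lt_of_lt_mul hab hlo hhi), hlo, hhi⟩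
  · rintro ⟨k, -, hk⟩
    exact ⟨k, hk⟩

theorem pairwise_disjoint_Ioo_mul_mul_add_one (hab : a ≤ b) :
    Pairwise (Disjoint on fun k => Ioo (k * b) ((k + 1) * a)) := by
  refine (pairwise_disjoint_on _).2 fun k l hkl => disjoint_left.2 fun x hk hl => ?_
  rw [mem_Ioo] at hk hl
  have : (k + 1) * a ≤ l * b := Nat.mul_le_mul hkl hab
  omega

theorem genus_intervalSgp (ha : 1 ≤ a) (hab : a < b) :
    (genus (intervalSgp a b) : ℤ) =
      ∑ k ∈ range ((a - 2) / (b - a) + 1), ((a : ℤ) - 1 - k * ((b : ℤ) - a)) := by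
  rw [genus, compl_intervalSgp hab, Set.ncard_coe_finset,
    card_biUnion ((pairwise_disjoint_Ioo_mul_mul_add_one hab.le).set_pairwise _)]
  push_cast
  refine sum_congr rfl fun k hk => ?_
  have hk := (Nat.le_div_iff_mul_le (by omega)).mp (Nat.lt_succ_iff.mp (mem_range.mp hk))
  have hsplit : k * b = k * a + k * (b - a) := by rw [← Nat.mul_add]; congr 1; omega
  rw [Nat.card_Ioo, add_one_mul]
  zify [show k * b ≤ k * a + a by omega, show 1 ≤ k * a + a - k * b by omega, hab.le] at hsplit ⊢
  linarith

/-- The genus of the semigroup generated by the interval `{i, …, j}` equals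
`Σ_{k=1}^{K} (i - 1 - (k-1)(j-i))` where `K = ⌊(j-2)/(j-i)⌋`. -/
theorem stmt9 (i j : ℕ) (h2 : 2 ≤ i) (hij : i < j) :
    (genus (intervalSgp i j) : ℤ) =
      ∑ k ∈ Finset.Icc 1 ((j - 2) / (j - i)),
        ((i : ℤ) - 1 - ((k : ℤ) - 1) * ((j : ℤ) - (i : ℤ))) := by
  have hK : (j - 2) / (j - i) = (i - 2) / (j - i) + 1 := by
    rw [show j - 2 = (i - 2) + (j - i) by omega, Nat.add_div_right _ (by omega)]
  rw [genus_intervalSgp (by omega) hij, hK, ← Ico_add_one_right_eq_Icc, sum_Ico_eq_sum_range]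
  simp

end NumSgpPaper
end
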